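/- arXiv:1910.12568 — 2 statements merged into one kernel-verified Lean document; each statement's English description precedes it below -/
import Mathlib

section
/- Let φ : ℝ² → ℝ be a C² function and let p be a nondegenerate critical point of φ. The Hessian map Hess_p φ : ℝ² → ℝ², x ↦ (Hess_p φ)·x, is a proper gradient map, and it is proper gradient homotopic to id_{ℝ²} if the Hessian of φ at p is positive definite, and proper gradient homotopic to −id_{ℝ²} if the Hessian of φ at p is negative definite. -/
open Set Metric Filter

noncomputable section

/-- Euclidean space `ℝⁿ`. -/
abbrev Euc (n : ℕ) := EuclideanSpace ℝ (Fin n)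

/-- A map `f : ℝⁿ → ℝⁿ` is gradient if it is the gradient of a `C¹` function `φ : ℝⁿ → ℝ`. -/
def IsGradient {n : ℕ} (f : Euc n → Euc n) : Prop :=
  ∃ φ : Euc n → ℝ, ContDiff ℝ 1 φ ∧ ∀ x, gradient φ x = f x

/-- A map is proper if preimages of compact sets are compact (our maps are continuous anyway). -/
def IsProper {n : ℕ} (f : Euc n → Euc n) : Prop :=
  ∀ K : Set (Euc n), IsCompact K → IsCompact (f ⁻¹' K)

/-- `h : [0,1] × ℝⁿ → ℝⁿ` is a gradient homotopy: it is continuous, each `h t` is a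
gradient map, and the zero set `h⁻¹(0)` (within `[0,1] × ℝⁿ`) is compact. -/
def IsGradientHomotopy {n : ℕ} (h : ℝ → Euc n → Euc n) : Prop :=
  ContinuousOn (fun p : ℝ × Euc n => h p.1 p.2) (Icc 0 1 ×ˢ univ) ∧
  (∀ t ∈ Icc (0:ℝ) 1, IsGradient (h t)) ∧
  IsCompact {p : ℝ × Euc n | p.1 ∈ Icc (0:ℝ) 1 ∧ h p.1 p.2 = 0}

/-- Two maps are gradient homotopic if some gradient homotopy connects them. -/
def GradientHomotopic {n : ℕ} (f g : Euc n → Euc n) : Prop :=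
  ∃ h : ℝ → Euc n → Euc n, IsGradientHomotopy h ∧ h 0 = f ∧ h 1 = g

/-- `h : [0,1] × ℝⁿ → ℝⁿ` is a proper gradient homotopy: it is continuous, each `h t` is a
gradient map, and `h` is proper as a map on `[0,1] × ℝⁿ`. -/
def IsProperGradientHomotopy {n : ℕ} (h : ℝ → Euc n → Euc n) : Prop :=
  ContinuousOn (fun p : ℝ × Euc n => h p.1 p.2) (Icc 0 1 ×ˢ univ) ∧
  (∀ t ∈ Icc (0:ℝ) 1, IsGradient (h t)) ∧
  (∀ K : Set (Euc n), IsCompact K →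
    IsCompact {p : ℝ × Euc n | p.1 ∈ Icc (0:ℝ) 1 ∧ h p.1 p.2 ∈ K})

/-- Two maps are proper gradient homotopic if some proper gradient homotopy connects them. -/
def ProperGradientHomotopic {n : ℕ} (f g : Euc n → Euc n) : Prop :=
  ∃ h : ℝ → Euc n → Euc n, IsProperGradientHomotopy h ∧ h 0 = f ∧ h 1 = g

open scoped RealInnerProductSpace

/-!
The Hessian `A = D(∇φ)(p)` is symmetric (Schwarz), so `x ↦ A x` is the gradient of the quadratic
form `½⟪A x, x⟫`, and as a linear isomorphism it is proper. If `A` is positive definite, compactness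
of the unit sphere makes it coercive, `c‖x‖² ≤ ⟪A x, x⟫`, and then every convex combination
`(1 - t) A + t id` is coercive with constant `min c 1`. Hence `min c 1 ‖x‖ ≤ ‖((1 - t) A + t id) x‖`
uniformly in `t`, which makes the straight-line homotopy proper. The negative definite case is
the positive definite one for `-A`, negated.
-/

section InnerProductSpace

variable {E : Type*} [NormedAddCommGroup E] [InnerProductSpace ℝ E]

namespace ContinuousLinearMap

theorem hasGradientAt_inv_two_mul_inner_self [CompleteSpace E] {A : E →L[ℝ] E}
    (hA : A.IsSymmetric) (x : E) : HasGradientAt (fun y => 2⁻¹ * ⟪A y, y⟫) (A x) x := by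
  rw [hasGradientAt_iff_hasFDerivAt]
  refine ((A.hasFDerivAt.inner ℝ (hasFDerivAt_id x)).const_mul 2⁻¹).congr_fderiv ?_
  ext v
  have hsymm : ⟪A v, x⟫ = ⟪A x, v⟫ := by rw [hA.apply_clm, real_inner_comm]
  simp only [smul_apply, comp_apply, prod_apply, id_apply, id_eq, fderivInnerCLM_apply,
    hsymm, smul_eq_mul, InnerProductSpace.toDual_apply_apply]
  ring

theorem exists_pos_mul_sq_le_inner_self [FiniteDimensional ℝ E] (A : E →L[ℝ] E)
    (hA : ∀ v ≠ 0, 0 < ⟪A v, v⟫) : ∃ c > 0, ∀ x, c * ‖x‖ ^ 2 ≤ ⟪A x, x⟫ := by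
  rcases subsingleton_or_nontrivial E with hE | hE
  · exact ⟨1, one_pos, fun x => by simp [Subsingleton.elim x 0]⟩
  obtain ⟨u, hu, hmin⟩ := (isCompact_sphere (0 : E) 1).exists_isMinOn
    (NormedSpace.sphere_nonempty.2 zero_le_one)
    (by fun_prop : Continuous fun x => ⟪A x, x⟫).continuousOn
  refine ⟨⟪A u, u⟫, hA u (ne_zero_of_mem_unit_sphere ⟨u, hu⟩), fun x => ?_⟩
  rcases eq_or_ne x 0 with rfl | hx
  · simp
  have hxpos : 0 < ‖x‖ := norm_pos_iff.2 hx
  have hmem : ‖x‖⁻¹ • x ∈ sphere (0 : E) 1 := by simp [norm_smul, hxpos.ne']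
  have hscale : ⟪A (‖x‖⁻¹ • x), ‖x‖⁻¹ • x⟫ = ⟪A x, x⟫ / ‖x‖ ^ 2 := by
    simp only [map_smul, real_inner_smul_left, real_inner_smul_right]
    field_simp
  rw [← le_div_iff₀ (by positivity), ← hscale]
  exact hmin hmem

theorem min_mul_sq_le_inner_convexComb {A B : E →L[ℝ] E} {a b t : ℝ} (ht : t ∈ Icc (0 : ℝ) 1)
    (hA : ∀ x, a * ‖x‖ ^ 2 ≤ ⟪A x, x⟫) (hB : ∀ x, b * ‖x‖ ^ 2 ≤ ⟪B x, x⟫) (x : E) :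
    min a b * ‖x‖ ^ 2 ≤ ⟪((1 - t) • A + t • B) x, x⟫ := by
  have hA' := mul_le_mul_of_nonneg_left ((mul_le_mul_of_nonneg_right (min_le_left a b)
    (sq_nonneg ‖x‖)).trans (hA x)) (sub_nonneg.2 ht.2)
  have hB' := mul_le_mul_of_nonneg_left ((mul_le_mul_of_nonneg_right (min_le_right a b)
    (sq_nonneg ‖x‖)).trans (hB x)) ht.1
  simp only [add_apply, smul_apply, inner_add_left, real_inner_smul_left]
  linarith

end ContinuousLinearMap

theorem isSymmetric_fderiv_gradient [CompleteSpace E] {φ : E → ℝ} {p : E}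
    (hφ : ContDiffAt ℝ 2 φ p) : (fderiv ℝ (gradient φ) p).IsSymmetric := by
  have hsymm : IsSymmSndFDerivAt ℝ φ p := hφ.isSymmSndFDerivAt (by simp)
  let e : StrongDual ℝ E ≃ₗᵢ[ℝ] E := (InnerProductSpace.toDual ℝ E).symm
  have hfd : fderiv ℝ (gradient φ) p =
      (e : StrongDual ℝ E →L[ℝ] E).comp (fderiv ℝ (fderiv ℝ φ) p) :=
    e.comp_fderiv
  intro u v
  change ⟪fderiv ℝ (gradient φ) p u, v⟫ = ⟪u, fderiv ℝ (gradient φ) p v⟫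
  simp only [hfd, ContinuousLinearMap.comp_apply, LinearIsometryEquiv.coe_coe'']
  rw [InnerProductSpace.toDual_symm_apply, real_inner_comm, InnerProductSpace.toDual_symm_apply]
  exact hsymm u v

theorem mul_norm_le_norm_of_mul_sq_le_inner {c : ℝ} {x y : E} (h : c * ‖x‖ ^ 2 ≤ ⟪y, x⟫) :
    c * ‖x‖ ≤ ‖y‖ := by
  rcases eq_or_ne x 0 with rfl | hx
  · simp
  refine le_of_mul_le_mul_right ?_ (norm_pos_iff.2 hx)
  calc c * ‖x‖ * ‖x‖ = c * ‖x‖ ^ 2 := by ring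
    _ ≤ ⟪y, x⟫ := h
    _ ≤ ‖y‖ * ‖x‖ := real_inner_le_norm y x

end InnerProductSpace

theorem isCompact_homotopy_preimage_of_mul_norm_le {E F : Type*} [NormedAddCommGroup E]
    [ProperSpace E] [NormedAddCommGroup F] {h : ℝ → E → F}
    (hcont : Continuous fun p : ℝ × E => h p.1 p.2)
    {c : ℝ} (hc : 0 < c) (hbound : ∀ t ∈ Icc (0 : ℝ) 1, ∀ x, c * ‖x‖ ≤ ‖h t x‖)
    {K : Set F} (hK : IsCompact K) :
    IsCompact {p : ℝ × E | p.1 ∈ Icc (0 : ℝ) 1 ∧ h p.1 p.2 ∈ K} := by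
  obtain ⟨R, hR⟩ := hK.isBounded.subset_closedBall 0
  have hslab : IsCompact (Icc (0 : ℝ) 1 ×ˢ closedBall (0 : E) (R / c)) :=
    isCompact_Icc.prod (isCompact_closedBall 0 _)
  refine hslab.of_isClosed_subset
    ((isClosed_Icc.preimage continuous_fst).inter (hK.isClosed.preimage hcont)) ?_
  rintro ⟨t, x⟩ ⟨ht, hx⟩
  refine ⟨ht, ?_⟩
  rw [mem_closedBall_zero_iff, le_div_iff₀' hc]
  exact (hbound t ht x).trans (mem_closedBall_zero_iff.1 (hR hx))

variable {n : ℕ}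

theorem isGradient_of_isSymmetric {A : Euc n →L[ℝ] Euc n} (hA : A.IsSymmetric) :
    IsGradient A :=
  ⟨fun y => 2⁻¹ * ⟪A y, y⟫, contDiff_const.mul (A.contDiff.inner ℝ contDiff_id),
    fun x => (A.hasGradientAt_inv_two_mul_inner_self hA x).gradient⟩

theorem isProper_of_bijective {A : Euc n →L[ℝ] Euc n} (hA : Function.Bijective A) :
    IsProper A := fun _ hK =>
  (LinearEquiv.ofBijective (A : Euc n →ₗ[ℝ] Euc n) hA).toContinuousLinearEquiv.toHomeomorph
    |>.isCompact_preimage.2 hK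

theorem IsGradient.neg {f : Euc n → Euc n} (hf : IsGradient f) : IsGradient (-f) := by
  obtain ⟨φ, hφ, hgrad⟩ := hf
  refine ⟨-φ, hφ.neg, fun x => ?_⟩
  simp [gradient, fderiv_neg, ← hgrad x]

theorem ProperGradientHomotopic.neg {f g : Euc n → Euc n} (hfg : ProperGradientHomotopic f g) :
    ProperGradientHomotopic (-f) (-g) := by
  obtain ⟨h, ⟨hcont, hgrad, hproper⟩, rfl, rfl⟩ := hfg
  refine ⟨fun t => -h t, ⟨hcont.neg, fun t ht => (hgrad t ht).neg, fun K hK => ?_⟩, rfl, rfl⟩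
  simpa [← Set.mem_neg] using hproper (-K) hK.neg

theorem properGradientHomotopic_of_coercive {A B : Euc n →L[ℝ] Euc n} (hAs : A.IsSymmetric)
    (hBs : B.IsSymmetric) {a b : ℝ} (ha : 0 < a) (hb : 0 < b)
    (hA : ∀ x, a * ‖x‖ ^ 2 ≤ ⟪A x, x⟫) (hB : ∀ x, b * ‖x‖ ^ 2 ≤ ⟪B x, x⟫) :
    ProperGradientHomotopic A B := by
  have hcont : Continuous fun p : ℝ × Euc n => ((1 - p.1) • A + p.1 • B) p.2 := by fun_prop
  refine ⟨fun t => ⇑((1 - t) • A + t • B), ⟨hcont.continuousOn, fun t _ => ?_, fun K hK => ?_⟩,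
    by simp, by simp⟩
  · refine isGradient_of_isSymmetric ?_
    simpa using (hAs.smul (conj_trivial (1 - t))).add (hBs.smul (conj_trivial t))
  · exact isCompact_homotopy_preimage_of_mul_norm_le hcont (lt_min ha hb) (fun t ht x =>
      mul_norm_le_norm_of_mul_sq_le_inner
        (ContinuousLinearMap.min_mul_sq_le_inner_convexComb ht hA hB x)) hK

theorem hessian_map_proper_gradient_homotopic_general (φ : Euc 2 → ℝ) (p : Euc 2)
    (hφ : ContDiff ℝ 2 φ)
    (hnondeg : Function.Bijective (fderiv ℝ (gradient φ) p)) :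
    IsGradient (fun x : Euc 2 => fderiv ℝ (gradient φ) p x) ∧
    IsProper (fun x : Euc 2 => fderiv ℝ (gradient φ) p x) ∧
    ((∀ v : Euc 2, v ≠ 0 → 0 < ⟪fderiv ℝ (gradient φ) p v, v⟫) →
      ProperGradientHomotopic (fun x : Euc 2 => fderiv ℝ (gradient φ) p x)
        (id : Euc 2 → Euc 2)) ∧
    ((∀ v : Euc 2, v ≠ 0 → ⟪fderiv ℝ (gradient φ) p v, v⟫ < 0) →
      ProperGradientHomotopic (fun x : Euc 2 => fderiv ℝ (gradient φ) p x)
        (fun x : Euc 2 => -x)) := by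
  set A := fderiv ℝ (gradient φ) p
  have hA : A.IsSymmetric := isSymmetric_fderiv_gradient hφ.contDiffAt
  have hid : (ContinuousLinearMap.id ℝ (Euc 2)).IsSymmetric := LinearMap.IsSymmetric.id
  have hid_coercive : ∀ x : Euc 2, 1 * ‖x‖ ^ 2 ≤ ⟪ContinuousLinearMap.id ℝ (Euc 2) x, x⟫ :=
    fun x => by simp
  refine ⟨isGradient_of_isSymmetric hA, isProper_of_bijective hnondeg, fun hpos => ?_,
    fun hneg => ?_⟩
  · obtain ⟨c, hc, hcA⟩ := A.exists_pos_mul_sq_le_inner_self hpos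
    exact properGradientHomotopic_of_coercive hA hid hc one_pos hcA hid_coercive
  · obtain ⟨c, hc, hcA⟩ := (-A).exists_pos_mul_sq_le_inner_self fun v hv => by
      simpa using hneg v hv
    have hA' : (-A).IsSymmetric := fun u v => by simp [hA.apply_clm u v]
    have h := (properGradientHomotopic_of_coercive hA' hid hc one_pos hcA hid_coercive).neg
    simp only [FunLike.coe_neg, neg_neg, ContinuousLinearMap.coe_id'] at h
    exact h

/-- for a `C²` function `φ : ℝ² → ℝ` with a nondegenerate critical point `p`,
the Hessian map `x ↦ (Hess_p φ) x` (the derivative at `p` of the gradient of `φ`) is a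
proper gradient map; it is proper gradient homotopic to `id` when the Hessian is positive
definite and to `-id` when the Hessian is negative definite. -/
theorem hessian_map_proper_gradient_homotopic (φ : Euc 2 → ℝ) (p : Euc 2)
    (hφ : ContDiff ℝ 2 φ) (hcrit : gradient φ p = 0)
    (hnondeg : Function.Bijective (fderiv ℝ (gradient φ) p)) :
    IsGradient (fun x : Euc 2 => fderiv ℝ (gradient φ) p x) ∧
    IsProper (fun x : Euc 2 => fderiv ℝ (gradient φ) p x) ∧
    ((∀ v : Euc 2, v ≠ 0 → 0 < ⟪fderiv ℝ (gradient φ) p v, v⟫) →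
      ProperGradientHomotopic (fun x : Euc 2 => fderiv ℝ (gradient φ) p x)
        (id : Euc 2 → Euc 2)) ∧
    ((∀ v : Euc 2, v ≠ 0 → ⟪fderiv ℝ (gradient φ) p v, v⟫ < 0) →
      ProperGradientHomotopic (fun x : Euc 2 => fderiv ℝ (gradient φ) p x)
        (fun x : Euc 2 => -x)) :=
  hessian_map_proper_gradient_homotopic_general φ p hφ hnondeg
end
end

section
/- Let f : ℝ² → ℝ² be a continuous map which is differentiable at 0 with f(0) = 0, and let Df_0 denote its derivative at 0. Define h : [0,1] × ℝ² → ℝ² by h(t,x) = f(tx)/t for t ≠ 0 and h(0,x) = Df_0(x). If Df_0 is nonsingular, f is proper, and f⁻¹(0) = {0}, then h is a proper map; that is, preimages of compact sets under h are compact. -/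
/-!
Writing `r y = f y - Df y`, the homotopy is `h (t, x) = Df x + t⁻¹ • r (t • x)` for every `t`
(also at `t = 0`, where `0⁻¹ = 0`), and `r = o(‖y‖)` makes the second term vanish as `t → 0`;
so `h` is continuous and the preimage is closed. For boundedness, `‖y‖ ≤ c ‖f y‖` on the
compact set `f⁻¹' ([0,1] • K)`: near `0` because `Df` is nonsingular, away from `0` because `f`
has no other zeros. Applied to `y = t • x`, where `f (t • x) = t • h (t, x)`, this bounds `‖x‖`
uniformly in `t`.
-/

open Set Metric

noncomputable section

open Filter Topology Asymptotics
open scoped Pointwise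

section MilnorHomotopy

variable {E F : Type*} [NormedAddCommGroup E] [NormedSpace ℝ E]
  [NormedAddCommGroup F] [NormedSpace ℝ F]

theorem HasFDerivAt.isBigO_sub_rev_of_antilipschitz {f : E → F} {f' : E →L[ℝ] F} {x : E}
    {C : NNReal} (hf : HasFDerivAt f f' x) (hf' : AntilipschitzWith C f') :
    (fun z => z - x) =O[𝓝 x] fun z => f z - f x := by
  have hlin : (fun z => z - x) =O[𝓝 x] fun z => f' (z - x) :=
    IsBigO.of_bound C (Eventually.of_forall fun z => f'.bound_of_antilipschitz hf' (z - x))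
  have hequiv : (fun z => f z - f x) ~[𝓝 x] fun z => f' (z - x) :=
    hf.isLittleO.trans_isBigO hlin
  exact hlin.trans hequiv.isBigO_symm

theorem HasFDerivAt.isBigO_rev_principal_of_isCompact {f : E → F} {Df : E →L[ℝ] F}
    {C : NNReal} {S : Set E} (hdf : HasFDerivAt f Df 0) (hDf : AntilipschitzWith C Df)
    (hf0 : f 0 = 0) (hS : IsCompact S) (hf : ContinuousOn f S)
    (hzero : ∀ y ∈ S, f y = 0 → y = 0) :
    (fun y => y) =O[𝓟 S] f := by
  have hnear : (fun y => y) =O[𝓝 0] f := by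
    simpa [hf0] using hdf.isBigO_sub_rev_of_antilipschitz hDf
  obtain ⟨c, hc⟩ := hnear.bound
  obtain ⟨U, hUc, hUo, hU0⟩ := _root_.eventually_nhds_iff.1 hc
  have hSU : IsCompact (S \ U) := hS.diff hUo
  have hfar : (fun y => y) =O[𝓟 (S \ U)] f :=
    (continuousOn_id.isBigO_principal hSU (c := (1 : ℝ)) (by simp)).trans
      ((hf.mono sdiff_subset).isBigO_rev_principal hSU
        (fun y hy hfy => hy.2 (hzero y hy.1 hfy ▸ hU0)) 1)
  refine ((isBigO_principal.2 ⟨c, hUc⟩).sup hfar).mono ?_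
  rw [sup_principal, union_sdiff_self]
  exact principal_mono.2 subset_union_right

theorem tendsto_inv_smul_comp_smul {g : E → F} (hg : g =o[𝓝 0] fun y => y) (x₀ : E) :
    Tendsto (fun p : ℝ × E => p.1⁻¹ • g (p.1 • p.2)) (𝓝 (0, x₀)) (𝓝 0) := by
  have hsmul : Tendsto (fun p : ℝ × E => p.1 • p.2) (𝓝 (0, x₀)) (𝓝 0) :=
    (continuous_fst.smul continuous_snd).tendsto' ((0 : ℝ), x₀) 0 (zero_smul ℝ x₀)
  have hsmall : (fun p : ℝ × E => p.1⁻¹ • g (p.1 • p.2)) =o[𝓝 (0, x₀)]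
      fun p => p.1⁻¹ • (p.1 • p.2) :=
    (isBigO_refl _ _).smul_isLittleO (hg.comp_tendsto hsmul)
  have hcancel : (fun p : ℝ × E => p.1⁻¹ • (p.1 • p.2)) =O[𝓝 (0, x₀)] fun p => p.2 := by
    refine IsBigO.of_bound 1 (Eventually.of_forall fun p => ?_)
    rcases eq_or_ne p.1 0 with h | h <;> simp [h]
  have hbdd : (fun p : ℝ × E => p.2) =O[𝓝 (0, x₀)] fun _ => (1 : ℝ) :=
    (continuous_snd.tendsto ((0 : ℝ), x₀)).isBigO_one ℝ
  exact (isLittleO_one_iff ℝ).1 (hsmall.trans_isBigO (hcancel.trans hbdd))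

def milnorHomotopy (f : E → F) (Df : E →L[ℝ] F) (p : ℝ × E) : F :=
  if p.1 = 0 then Df p.2 else p.1⁻¹ • f (p.1 • p.2)

variable {f : E → F} {Df : E →L[ℝ] F}

theorem milnorHomotopy_eq_add (p : ℝ × E) :
    milnorHomotopy f Df p = Df p.2 + p.1⁻¹ • (f (p.1 • p.2) - Df (p.1 • p.2)) := by
  rcases eq_or_ne p.1 0 with h | h
  · simp [milnorHomotopy, h]
  · simp [milnorHomotopy, h, smul_sub, smul_smul]

theorem continuous_milnorHomotopy (hf : Continuous f) (hf0 : f 0 = 0)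
    (hdf : HasFDerivAt f Df 0) : Continuous (milnorHomotopy f Df) := by
  have hg : (fun y => f y - Df y) =o[𝓝 0] fun y => y := by
    simpa [hf0] using hdf.isLittleO
  rw [funext milnorHomotopy_eq_add]
  refine (Df.continuous.comp continuous_snd).add (continuous_iff_continuousAt.2 ?_)
  rintro ⟨t, x⟩
  rcases eq_or_ne t 0 with rfl | ht
  · simpa [ContinuousAt] using tendsto_inv_smul_comp_smul hg x
  · exact (continuousAt_fst.inv₀ ht).smul
      ((hf.sub Df.continuous).comp (continuous_fst.smul continuous_snd)).continuousAt

theorem isBounded_milnorHomotopy_preimage {C : NNReal} {K : Set F} (hf : Continuous f)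
    (hf0 : f 0 = 0) (hdf : HasFDerivAt f Df 0) (hDf : AntilipschitzWith C Df)
    (hproper : ∀ K : Set F, IsCompact K → IsCompact (f ⁻¹' K))
    (hzero : ∀ y, f y = 0 → y = 0) (hK : IsCompact K) :
    Bornology.IsBounded {p : ℝ × E | p.1 ∈ Icc (0 : ℝ) 1 ∧ milnorHomotopy f Df p ∈ K} := by
  obtain ⟨R, hR⟩ := hK.isBounded.subset_closedBall 0
  have hS : IsCompact (f ⁻¹' (Icc (0 : ℝ) 1 • K)) := hproper _ (isCompact_Icc.smul_set hK)
  obtain ⟨c, hc0, hc⟩ := (hdf.isBigO_rev_principal_of_isCompact hDf hf0 hS hf.continuousOn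
    fun y _ => hzero y).exists_nonneg
  rw [isBigOWith_principal] at hc
  refine ((isBounded_Icc (0 : ℝ) 1).prod (isBounded_closedBall (x := (0 : E))
    (r := max (c * R) (C * R)))).subset ?_
  rintro ⟨t, x⟩ ⟨ht, hx⟩
  have hxR : ‖milnorHomotopy f Df (t, x)‖ ≤ R := mem_closedBall_zero_iff.1 (hR hx)
  refine ⟨ht, mem_closedBall_zero_iff.2 ?_⟩
  rcases ht.1.eq_or_lt with rfl | htpos
  · simp only [milnorHomotopy, if_pos] at hxR
    calc ‖x‖ ≤ C * ‖Df x‖ := Df.bound_of_antilipschitz hDf x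
      _ ≤ C * R := by gcongr
      _ ≤ _ := le_max_right _ _
  · have hfx : f (t • x) = t • milnorHomotopy f Df (t, x) := by
      simp [milnorHomotopy, htpos.ne', smul_smul]
    have hbound := hc (t • x) (by rw [mem_preimage, hfx]; exact smul_mem_smul ht hx)
    rw [hfx, norm_smul, norm_smul, Real.norm_of_nonneg htpos.le] at hbound
    have hxcR : ‖x‖ ≤ c * R := by
      refine le_of_mul_le_mul_left ?_ htpos
      calc t * ‖x‖ ≤ c * (t * ‖milnorHomotopy f Df (t, x)‖) := hbound
        _ = t * (c * ‖milnorHomotopy f Df (t, x)‖) := by ring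
        _ ≤ t * (c * R) := by gcongr
    exact hxcR.trans (le_max_left _ _)

theorem isCompact_milnorHomotopy_preimage [ProperSpace E] {C : NNReal} {K : Set F}
    (hf : Continuous f) (hf0 : f 0 = 0) (hdf : HasFDerivAt f Df 0)
    (hDf : AntilipschitzWith C Df) (hproper : ∀ K : Set F, IsCompact K → IsCompact (f ⁻¹' K))
    (hzero : ∀ y, f y = 0 → y = 0) (hK : IsCompact K) :
    IsCompact {p : ℝ × E | p.1 ∈ Icc (0 : ℝ) 1 ∧ milnorHomotopy f Df p ∈ K} :=
  isCompact_of_isClosed_isBounded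
    ((isClosed_Icc.preimage continuous_fst).inter
      (hK.isClosed.preimage (continuous_milnorHomotopy hf hf0 hdf)))
    (isBounded_milnorHomotopy_preimage hf hf0 hdf hDf hproper hzero hK)

end MilnorHomotopy

/-- let `f : ℝ² → ℝ²` be continuous, differentiable at `0`, `f 0 = 0`, with
nonsingular derivative `Df₀`, `f` proper and `f⁻¹(0) = {0}`.  Then the Milnor-trick
homotopy `h(t,x) = f(tx)/t` (`t ≠ 0`), `h(0,x) = Df₀(x)`, is proper on `[0,1] × ℝ²`:
preimages of compact sets are compact. -/
theorem milnor_trick_proper (f : Euc 2 → Euc 2) (Df : Euc 2 →L[ℝ] Euc 2)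
    (hf : Continuous f) (hf0 : f 0 = 0) (hdf : HasFDerivAt f Df 0)
    (hreg : Function.Bijective Df)
    (hproper : ∀ K : Set (Euc 2), IsCompact K → IsCompact (f ⁻¹' K))
    (hzero : f ⁻¹' {0} = {0}) :
    ∀ K : Set (Euc 2), IsCompact K →
      IsCompact {p : ℝ × Euc 2 | p.1 ∈ Icc (0:ℝ) 1 ∧
        (if p.1 = 0 then Df p.2 else p.1⁻¹ • f (p.1 • p.2)) ∈ K} := by
  intro K hK
  obtain ⟨C, -, hDf⟩ := (Df : Euc 2 →ₗ[ℝ] Euc 2).injective_iff_antilipschitz.1 hreg.1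
  exact isCompact_milnorHomotopy_preimage hf hf0 hdf hDf hproper
    (fun y hy => hzero.subset hy) hK
end
end
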